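/- Let H be a bounded self-adjoint operator on ℓ²(Γ;𝓗) that is locally ε-bulk-gapped at energy λ ∈ ℝ and scale L > 0. Then the open interval (λ − ε, λ + ε) is disjoint from the spectrum of H, i.e. σ(H) ∩ (λ − ε, λ + ε) = ∅. -/

import Mathlib

noncomputable section

open scoped ENNReal

/-- The squared ℓ²-mass of `ψ` in the region `A ⊆ ℝ^d`
(the ambient space `Fin d → ℝ` carries the sup norm). -/
def massSq {d : ℕ} (Γ : Set (Fin d → ℝ)) {𝓗 : Type*} [NormedAddCommGroup 𝓗]
    (ψ : lp (fun _ : Γ => 𝓗) 2) (A : Set (Fin d → ℝ)) : ℝ :=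
  ∑' x : Γ, A.indicator (fun _ => ‖ψ x‖ ^ 2) (x : Fin d → ℝ)

/-- The ℓ²-norm `‖ψ‖_A` of `ψ` in the region `A ⊆ ℝ^d`. -/
def normOn {d : ℕ} (Γ : Set (Fin d → ℝ)) {𝓗 : Type*} [NormedAddCommGroup 𝓗]
    (ψ : lp (fun _ : Γ => 𝓗) 2) (A : Set (Fin d → ℝ)) : ℝ :=
  Real.sqrt (massSq Γ ψ A)

/-- `H` is locally ε-bulk-gapped at energy `lam` and scale `L`: there are `N ≥ 2` and
`C < N⁻ᵈ` such that every `L`-local `ε`-quasimode at a point `x ∈ Γ` has its mass in the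
small closed cube `B̄_l(x)`, `l = (L+r)/N + r`, bounded by `C` times its mass in `B_L(x)`. -/
def IsLocallyBulkGapped {d : ℕ} (Γ : Set (Fin d → ℝ)) {𝓗 : Type*} [NormedAddCommGroup 𝓗]
    [InnerProductSpace ℂ 𝓗] [CompleteSpace 𝓗] (r : ℝ)
    (H : lp (fun _ : Γ => 𝓗) 2 →L[ℂ] lp (fun _ : Γ => 𝓗) 2) (lam ε L : ℝ) : Prop :=
  ∃ N : ℕ, 2 ≤ N ∧ ∃ C : ℝ, C < ((N : ℝ) ^ d)⁻¹ ∧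
    ∀ x ∈ Γ, ∀ ψ : lp (fun _ : Γ => 𝓗) 2,
      normOn Γ ((H - (lam : ℂ) • 1) ψ) (Metric.ball x L) ≤ ε * normOn Γ ψ (Metric.ball x L) →
      massSq Γ ψ (Metric.closedBall x ((L + r) / N + r)) ≤ C * massSq Γ ψ (Metric.ball x L)

/-!
Fix a real `μ` with `|μ - λ| < ε`, a vector `φ`, and put `w = (H - μ) φ`. At each `x ∈ Γ`, either
`φ` is an `ε`-quasimode of `H - λ` on `B_L(x)`, and the bulk-gap bound holds there, or it is not,
and then `(H - λ) φ = w + (μ - λ) φ` gives `‖φ‖_{B_L(x)} ≤ (ε - |μ - λ|)⁻¹ ‖w‖_{B_L(x)}`.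
Tile `ℝᵈ` by cubes of side `2 (L + r) / N`, each represented by a point of the `r`-net `Γ` near
its center. Every cube lies in the small cube `B̄_l` of its representative, and every point lies
in at most `Nᵈ` of the balls `B_L`, so summing the local alternatives gives
`‖φ‖² ≤ Nᵈ (C ‖φ‖² + κ ‖w‖²)` with `κ = (ε - |μ - λ|)⁻²`; since `C Nᵈ < 1`, `‖φ‖` is bounded
by a multiple of `‖w‖`.
(If `l ≥ L`, the first alternative forces `φ = 0` on `B_L(x)`, and a finer tiling does the job.)
So `H - μ` is bounded below, and a self-adjoint operator that is bounded below is invertible.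
-/

open Finset Metric

namespace lp

variable {α E : Type*} [NormedAddCommGroup E]

lemma summable_norm_sq (f : lp (fun _ : α => E) 2) : Summable fun i => ‖f i‖ ^ 2 := by
  simpa using (lp.memℓp f).summable (by norm_num : (0 : ℝ) < (2 : ℝ≥0∞).toReal)

lemma tsum_norm_sq (f : lp (fun _ : α => E) 2) : ∑' i, ‖f i‖ ^ 2 = ‖f‖ ^ 2 := by
  simpa using (lp.norm_rpow_eq_tsum (by norm_num : (0 : ℝ) < (2 : ℝ≥0∞).toReal) f).symm

variable {p : ℝ≥0∞}

def indicator (s : Set α) (f : lp (fun _ : α => E) p) : lp (fun _ : α => E) p :=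
  ⟨s.indicator f, (lp.memℓp f).mono' fun i => norm_indicator_le_norm_self f i⟩

@[simp]
lemma coe_indicator (s : Set α) (f : lp (fun _ : α => E) p) : ⇑(indicator s f) = s.indicator f :=
  rfl

lemma indicator_add (s : Set α) (f g : lp (fun _ : α => E) p) :
    indicator s (f + g) = indicator s f + indicator s g :=
  lp.ext (Set.indicator_add' s f g)

lemma indicator_smul {𝕜 : Type*} [NormedRing 𝕜] [Module 𝕜 E] [IsBoundedSMul 𝕜 E]
    (s : Set α) (c : 𝕜) (f : lp (fun _ : α => E) p) :
    indicator s (c • f) = c • indicator s f :=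
  lp.ext (Set.indicator_const_smul s c f)

end lp

section Mass

variable {d : ℕ} {Γ : Set (Fin d → ℝ)} {𝓗 : Type*} [NormedAddCommGroup 𝓗]

lemma massSq_eq_norm_indicator_sq (ψ : lp (fun _ : Γ => 𝓗) 2) (A : Set (Fin d → ℝ)) :
    massSq Γ ψ A = ‖lp.indicator ((↑) ⁻¹' A) ψ‖ ^ 2 := by
  rw [massSq, ← lp.tsum_norm_sq]
  congr 1 with x
  by_cases hx : (x : Fin d → ℝ) ∈ A <;> simp [hx]

lemma normOn_eq_norm_indicator (ψ : lp (fun _ : Γ => 𝓗) 2) (A : Set (Fin d → ℝ)) :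
    normOn Γ ψ A = ‖lp.indicator ((↑) ⁻¹' A) ψ‖ := by
  rw [normOn, massSq_eq_norm_indicator_sq, Real.sqrt_sq (norm_nonneg _)]

lemma massSq_eq_normOn_sq (ψ : lp (fun _ : Γ => 𝓗) 2) (A : Set (Fin d → ℝ)) :
    massSq Γ ψ A = normOn Γ ψ A ^ 2 := by
  rw [normOn_eq_norm_indicator, massSq_eq_norm_indicator_sq]

lemma massSq_nonneg (ψ : lp (fun _ : Γ => 𝓗) 2) (A : Set (Fin d → ℝ)) : 0 ≤ massSq Γ ψ A := by
  rw [massSq_eq_norm_indicator_sq]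
  positivity

lemma summable_indicator_norm_sq (ψ : lp (fun _ : Γ => 𝓗) 2) (A : Set (Fin d → ℝ)) :
    Summable fun x : Γ => A.indicator (fun _ => ‖ψ x‖ ^ 2) (x : Fin d → ℝ) :=
  (lp.summable_norm_sq ψ).of_nonneg_of_le
    (fun _ => Set.indicator_nonneg (fun _ _ => by positivity) _)
    fun _ => Set.indicator_le_self' (fun _ _ => by positivity) _

lemma massSq_mono (ψ : lp (fun _ : Γ => 𝓗) 2) {A B : Set (Fin d → ℝ)} (h : A ⊆ B) :
    massSq Γ ψ A ≤ massSq Γ ψ B :=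
  (summable_indicator_norm_sq ψ A).tsum_le_tsum
    (fun _ => Set.indicator_le_indicator_of_subset h (fun _ => by positivity) _)
    (summable_indicator_norm_sq ψ B)

lemma sum_norm_sq_le_massSq (ψ : lp (fun _ : Γ => 𝓗) 2) {A : Set (Fin d → ℝ)} {F : Finset Γ}
    (hF : ∀ p ∈ F, (p : Fin d → ℝ) ∈ A) : ∑ p ∈ F, ‖ψ p‖ ^ 2 ≤ massSq Γ ψ A := calc
  ∑ p ∈ F, ‖ψ p‖ ^ 2 = ∑ p ∈ F, A.indicator (fun _ => ‖ψ p‖ ^ 2) (p : Fin d → ℝ) :=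
    sum_congr rfl fun p hp => (Set.indicator_of_mem (hF p hp) (fun _ => ‖ψ p‖ ^ 2)).symm
  _ ≤ massSq Γ ψ A :=
    (summable_indicator_norm_sq ψ A).sum_le_tsum F
      fun _ _ => Set.indicator_nonneg (fun _ _ => by positivity) _

lemma normOn_add_smul_le [NormedSpace ℂ 𝓗] (φ ψ : lp (fun _ : Γ => 𝓗) 2) (c : ℂ)
    (A : Set (Fin d → ℝ)) : normOn Γ (φ + c • ψ) A ≤ normOn Γ φ A + ‖c‖ * normOn Γ ψ A := by
  simp only [normOn_eq_norm_indicator, lp.indicator_add, lp.indicator_smul, ← norm_smul]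
  exact norm_add_le _ _

lemma sum_massSq_le_mul_norm_sq (ψ : lp (fun _ : Γ => 𝓗) 2) {ι : Type*} (G : Finset ι)
    (A : ι → Set (Fin d → ℝ)) {K : ℕ} (hK : ∀ y, ∀ G' ⊆ G, (∀ k ∈ G', y ∈ A k) → #G' ≤ K) :
    ∑ k ∈ G, massSq Γ ψ (A k) ≤ K * ‖ψ‖ ^ 2 := by
  classical
  have hpoint : ∀ x : Γ, ∑ k ∈ G, (A k).indicator (fun _ => ‖ψ x‖ ^ 2) (x : Fin d → ℝ)
      ≤ K * ‖ψ x‖ ^ 2 := fun x => by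
    simp only [Set.indicator_apply, ← sum_filter, sum_const, nsmul_eq_mul]
    gcongr
    exact_mod_cast hK x _ (filter_subset _ _) fun k hk => (mem_filter.1 hk).2
  calc ∑ k ∈ G, massSq Γ ψ (A k)
      = ∑' x : Γ, ∑ k ∈ G, (A k).indicator (fun _ => ‖ψ x‖ ^ 2) (x : Fin d → ℝ) :=
        (Summable.tsum_finsetSum fun k _ => summable_indicator_norm_sq ψ (A k)).symm
    _ ≤ ∑' x : Γ, K * ‖ψ x‖ ^ 2 :=
        (summable_sum fun k _ => summable_indicator_norm_sq ψ (A k)).tsum_le_tsum hpoint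
          ((lp.summable_norm_sq ψ).mul_left _)
    _ = K * ‖ψ‖ ^ 2 := by rw [tsum_mul_left, lp.tsum_norm_sq]

lemma sum_norm_sq_le_sum_massSq {ι : Type*} [DecidableEq ι] (ψ : lp (fun _ : Γ => 𝓗) 2)
    (cell : Γ → ι) (S : ι → Set (Fin d → ℝ)) (hS : ∀ p : Γ, (p : Fin d → ℝ) ∈ S (cell p))
    (F : Finset Γ) : ∑ p ∈ F, ‖ψ p‖ ^ 2 ≤ ∑ k ∈ F.image cell, massSq Γ ψ (S k) := by
  rw [← sum_fiberwise_of_maps_to fun p hp => mem_image_of_mem cell hp]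
  gcongr with k
  exact sum_norm_sq_le_massSq ψ fun p hp => (mem_filter.1 hp).2 ▸ hS p

end Mass

section Cubes

variable {d : ℕ}

/-- The index `k ∈ ℤᵈ` of the half-open cube `∏ᵢ [a kᵢ, a kᵢ + a)` containing `p`. -/
def cubeIndex (a : ℝ) (p : Fin d → ℝ) : Fin d → ℤ := fun i => ⌊p i / a⌋

def cubeCenter (a : ℝ) (k : Fin d → ℤ) : Fin d → ℝ := fun i => a * k i + a / 2

lemma dist_cubeCenter_cubeIndex_le {a : ℝ} (ha : 0 < a) (p : Fin d → ℝ) :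
    dist p (cubeCenter a (cubeIndex a p)) ≤ a / 2 := by
  refine (dist_pi_le_iff (by positivity)).2 fun i => ?_
  have hlow := (le_div_iff₀ ha).1 (Int.floor_le (p i / a))
  have hup := (div_lt_iff₀ ha).1 (Int.lt_floor_add_one (p i / a))
  rw [Real.dist_eq, abs_le]
  simp only [cubeCenter, cubeIndex]
  constructor <;> linarith

lemma card_le_pow_of_forall_mem_Ioo (t : Fin d → ℝ) (n : ℕ) (G : Finset (Fin d → ℤ))
    (hG : ∀ k ∈ G, ∀ i, (k i : ℝ) ∈ Set.Ioo (t i) (t i + n)) : #G ≤ n ^ d := calc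
  #G ≤ #(Fintype.piFinset fun i => Icc (⌊t i⌋ + 1) (⌊t i⌋ + n)) := by
    refine card_le_card fun k hk => Fintype.mem_piFinset.2 fun i => mem_Icc.2 ⟨?_, ?_⟩
    · have := Int.floor_lt.2 (hG k hk i).1
      omega
    · have := Int.le_floor.2
        (show ((k i - n : ℤ) : ℝ) ≤ t i by push_cast; linarith [(hG k hk i).2])
      omega
  _ = n ^ d := by simp

lemma card_le_pow_of_forall_dist_cubeCenter_lt {a R : ℝ} {n : ℕ} (ha : 0 < a)
    (hR : 2 * R ≤ n * a) (y : Fin d → ℝ) (G : Finset (Fin d → ℤ))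
    (hG : ∀ k ∈ G, dist y (cubeCenter a k) < R) : #G ≤ n ^ d := by
  refine card_le_pow_of_forall_mem_Ioo (fun i => (y i - a / 2 - R) / a) n G fun k hk i => ?_
  have hi := (dist_le_pi_dist y (cubeCenter a k) i).trans_lt (hG k hk)
  rw [Real.dist_eq, abs_lt] at hi
  simp only [cubeCenter] at hi
  rw [Set.mem_Ioo, div_lt_iff₀ ha, div_add' _ _ _ ha.ne', lt_div_iff₀ ha]
  constructor <;> linarith

end Cubes

section Covering

variable {d : ℕ} {Γ : Set (Fin d → ℝ)} {𝓗 : Type*} [NormedAddCommGroup 𝓗]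

/-- Since `2 (L + ρ) ≤ n a`, a point of `ℝᵈ` lies in at most `nᵈ` of the balls `B_L(c k)`. -/
theorem norm_sq_le_of_cubeCover (φ w : lp (fun _ : Γ => 𝓗) 2) {a ρ L C κ : ℝ} {n : ℕ}
    (ha : 0 < a) (hC : 0 ≤ C) (hκ : 0 ≤ κ) (hn : 2 * (L + ρ) ≤ n * a)
    (c : (Fin d → ℤ) → Fin d → ℝ)
    (hc : ∀ p : Γ, dist (c (cubeIndex a p)) (cubeCenter a (cubeIndex a p)) ≤ ρ)
    (hlocal : ∀ p : Γ, massSq Γ φ (closedBall (c (cubeIndex a p)) (a / 2 + ρ)) ≤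
      C * massSq Γ φ (ball (c (cubeIndex a p)) L) + κ * massSq Γ w (ball (c (cubeIndex a p)) L)) :
    ‖φ‖ ^ 2 ≤ n ^ d * (C * ‖φ‖ ^ 2 + κ * ‖w‖ ^ 2) := by
  classical
  let cell : Γ → Fin d → ℤ := fun p => cubeIndex a p
  have hmem : ∀ p : Γ, (p : Fin d → ℝ) ∈ closedBall (c (cell p)) (a / 2 + ρ) := fun p =>
    (dist_triangle _ _ _).trans <| add_le_add (dist_cubeCenter_cubeIndex_le ha (p : Fin d → ℝ))
      (dist_comm (c (cell p)) _ ▸ hc p)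
  nth_rw 1 [← lp.tsum_norm_sq φ]
  refine (lp.summable_norm_sq φ).tsum_le_of_sum_le fun F => ?_
  have hoverlap : ∀ y, ∀ G ⊆ F.image cell, (∀ k ∈ G, y ∈ ball (c k) L) → #G ≤ n ^ d :=
    fun y G hG hy => card_le_pow_of_forall_dist_cubeCenter_lt ha hn y G fun k hk => by
      obtain ⟨p, -, rfl⟩ := mem_image.1 (hG hk)
      exact (dist_triangle _ _ _).trans_lt (add_lt_add_of_lt_of_le (hy _ hk) (hc p))
  have hsum (ψ : lp (fun _ : Γ => 𝓗) 2) :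
      ∑ k ∈ F.image cell, massSq Γ ψ (ball (c k) L) ≤ n ^ d * ‖ψ‖ ^ 2 := by
    exact_mod_cast sum_massSq_le_mul_norm_sq ψ _ _ hoverlap
  calc ∑ p ∈ F, ‖φ p‖ ^ 2
      ≤ ∑ k ∈ F.image cell, massSq Γ φ (closedBall (c k) (a / 2 + ρ)) :=
        sum_norm_sq_le_sum_massSq φ cell _ hmem F
    _ ≤ ∑ k ∈ F.image cell,
          (C * massSq Γ φ (ball (c k) L) + κ * massSq Γ w (ball (c k) L)) :=
        sum_le_sum fun k hk => by
          obtain ⟨p, -, rfl⟩ := mem_image.1 hk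
          exact hlocal p
    _ = C * ∑ k ∈ F.image cell, massSq Γ φ (ball (c k) L)
          + κ * ∑ k ∈ F.image cell, massSq Γ w (ball (c k) L) := by
        rw [sum_add_distrib, mul_sum, mul_sum]
    _ ≤ C * (n ^ d * ‖φ‖ ^ 2) + κ * (n ^ d * ‖w‖ ^ 2) := by
        gcongr
        exacts [hsum φ, hsum w]
    _ = n ^ d * (C * ‖φ‖ ^ 2 + κ * ‖w‖ ^ 2) := by ring

/-- Cubes of side `2 (L + r) / N`, each represented by a point of the `r`-net `Γ` near its
center: a point then lies in at most `Nᵈ` of the balls `B_L`, and each cube lies in the small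
cube `B̄_l` around its representative. -/
theorem norm_sq_le_of_forall_massSq_closedBall_le_or
    (φ w : lp (fun _ : Γ => 𝓗) 2) {r L C κ : ℝ} {N : ℕ}
    (hnet : ∀ p : Fin d → ℝ, ∃ x ∈ Γ, ‖p - x‖ ≤ r) (hL : 0 < L) (hr : 0 ≤ r) (hN : 0 < N)
    (hlt : (L + r) / N + r < L) (hC : 0 ≤ C) (hκ : 0 ≤ κ)
    (hdich : ∀ x ∈ Γ, massSq Γ φ (closedBall x ((L + r) / N + r)) ≤ C * massSq Γ φ (ball x L)
      ∨ massSq Γ φ (ball x L) ≤ κ * massSq Γ w (ball x L)) :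
    ‖φ‖ ^ 2 ≤ N ^ d * (C * ‖φ‖ ^ 2 + κ * ‖w‖ ^ 2) := by
  choose ν hνΓ hν using hnet
  have hN' : (0 : ℝ) < N := by exact_mod_cast hN
  set a := 2 * (L + r) / N
  refine norm_sq_le_of_cubeCover φ w (a := a) (ρ := r) (L := L) (n := N) (by positivity) hC hκ
    (le_of_eq (by simp only [a]; field_simp)) (fun k => ν (cubeCenter a k)) (fun p => ?_)
    (fun p => ?_)
  · rw [dist_comm, dist_eq_norm]
    exact hν _
  · rw [show a / 2 + r = (L + r) / N + r by ring]
    rcases hdich _ (hνΓ _) with h | h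
    · exact h.trans (le_add_of_nonneg_right (mul_nonneg hκ (massSq_nonneg _ _)))
    · exact (massSq_mono φ (closedBall_subset_ball hlt)).trans
        (h.trans (le_add_of_nonneg_left (mul_nonneg hC (massSq_nonneg _ _))))

/-- Cubes of side `L / 2`, each represented by one of its points of `Γ`. -/
theorem norm_sq_le_of_forall_massSq_ball_le [Nonempty Γ] (φ w : lp (fun _ : Γ => 𝓗) 2)
    {L κ : ℝ} (hL : 0 < L) (hκ : 0 ≤ κ)
    (hball : ∀ x ∈ Γ, massSq Γ φ (ball x L) ≤ κ * massSq Γ w (ball x L)) :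
    ‖φ‖ ^ 2 ≤ 5 ^ d * (κ * ‖w‖ ^ 2) := by
  let cell : Γ → Fin d → ℤ := fun p => cubeIndex (L / 2) p
  let rep : (Fin d → ℤ) → Γ := Function.invFun cell
  have hrep (p : Γ) : cubeIndex (L / 2) (rep (cell p) : Fin d → ℝ) = cell p :=
    Function.invFun_eq (f := cell) ⟨p, rfl⟩
  refine (norm_sq_le_of_cubeCover φ w (a := L / 2) (L := L) (C := 0) (ρ := L / 4) (n := 5)
    (half_pos hL) le_rfl hκ (by norm_num; linarith) (fun k => rep k) (fun p => ?_)
    (fun p => ?_)).trans_eq (by push_cast; ring)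
  · have := dist_cubeCenter_cubeIndex_le (half_pos hL) (rep (cell p) : Fin d → ℝ)
    rw [hrep p] at this
    exact this.trans_eq (by ring)
  · have hsub : L / 2 / 2 + L / 4 < L := by linarith
    refine (massSq_mono φ (closedBall_subset_ball hsub)).trans ?_
    simpa using hball _ (rep (cell p)).2

end Covering

theorem IsSelfAdjoint.ofReal_notMem_spectrum_of_norm_sq_le {E : Type*} [NormedAddCommGroup E]
    [InnerProductSpace ℂ E] [CompleteSpace E] {T : E →L[ℂ] E} (hT : IsSelfAdjoint T) {μ K : ℝ}
    (hK : ∀ x, ‖x‖ ^ 2 ≤ K * ‖(T - (μ : ℂ) • 1) x‖ ^ 2) : (μ : ℂ) ∉ spectrum ℂ T := by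
  set S := T - (μ : ℂ) • 1
  have hS : IsSelfAdjoint S := hT.sub (IsSelfAdjoint.smul (Complex.conj_ofReal μ) (.one _))
  have hanti : AntilipschitzWith (Real.sqrt K).toNNReal S := S.antilipschitz_of_bound fun x => by
    rw [Real.coe_toNNReal _ (Real.sqrt_nonneg K), ← Real.sqrt_sq (norm_nonneg x),
      ← Real.sqrt_sq (norm_nonneg (S x)), ← Real.sqrt_mul' _ (sq_nonneg _)]
    exact Real.sqrt_le_sqrt (hK x)
  have hbij : Function.Bijective S := by
    refine S.bijective_iff_dense_range_and_antilipschitz.2 ⟨?_, _, hanti⟩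
    rw [Submodule.topologicalClosure_eq_top_iff, S.orthogonal_range, hS.adjoint_eq]
    exact LinearMap.ker_eq_bot.2 hanti.injective
  rw [spectrum.notMem_iff, Algebra.algebraMap_eq_smul_one, ← neg_sub]
  exact (ContinuousLinearMap.isUnit_iff_bijective.2 hbij).neg

section BoundedBelow

variable {d : ℕ} {Γ : Set (Fin d → ℝ)} {𝓗 : Type*} [NormedAddCommGroup 𝓗]

lemma massSq_le_of_mul_normOn_lt [NormedSpace ℂ 𝓗]
    (H : lp (fun _ : Γ => 𝓗) 2 →L[ℂ] lp (fun _ : Γ => 𝓗) 2) {lam μ ε : ℝ} (hμ : |μ - lam| < ε)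
    (φ : lp (fun _ : Γ => 𝓗) 2) (A : Set (Fin d → ℝ))
    (h : ε * normOn Γ φ A < normOn Γ ((H - (lam : ℂ) • 1) φ) A) :
    massSq Γ φ A ≤ ((ε - |μ - lam|) ^ 2)⁻¹ * massSq Γ ((H - (μ : ℂ) • 1) φ) A := by
  have hsplit : (H - (lam : ℂ) • 1) φ = (H - (μ : ℂ) • 1) φ + ((μ : ℂ) - lam) • φ := by
    simp only [sub_apply, smul_apply, one_apply_eq_self, sub_smul]
    abel
  have htri := normOn_add_smul_le ((H - (μ : ℂ) • 1) φ) φ ((μ : ℂ) - lam) A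
  rw [← hsplit, ← Complex.ofReal_sub, Complex.norm_real, Real.norm_eq_abs] at htri
  have hlow : (ε - |μ - lam|) * normOn Γ φ A ≤ normOn Γ ((H - (μ : ℂ) • 1) φ) A := by linarith
  rw [massSq_eq_normOn_sq, massSq_eq_normOn_sq, le_inv_mul_iff₀ (pow_pos (sub_pos.2 hμ) 2),
    ← mul_pow]
  exact pow_le_pow_left₀ (mul_nonneg (sub_nonneg.2 hμ.le) (Real.sqrt_nonneg _)) hlow 2

theorem IsLocallyBulkGapped.exists_norm_sq_le [InnerProductSpace ℂ 𝓗] [CompleteSpace 𝓗]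
    {r lam ε L μ : ℝ} {H : lp (fun _ : Γ => 𝓗) 2 →L[ℂ] lp (fun _ : Γ => 𝓗) 2}
    (hgap : IsLocallyBulkGapped Γ r H lam ε L) (hnet : ∀ p : Fin d → ℝ, ∃ x ∈ Γ, ‖p - x‖ ≤ r)
    (hL : 0 < L) (hμ : |μ - lam| < ε) :
    ∃ K, ∀ φ, ‖φ‖ ^ 2 ≤ K * ‖(H - (μ : ℂ) • 1) φ‖ ^ 2 := by
  obtain ⟨N, hN, C₀, hC₀, hquasi⟩ := hgap
  obtain ⟨x₀, hx₀, hr⟩ := hnet 0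
  have : Nonempty Γ := ⟨⟨x₀, hx₀⟩⟩
  set C := max C₀ 0
  set κ := ((ε - |μ - lam|) ^ 2)⁻¹
  have hNd : (1 : ℝ) ≤ N ^ d := one_le_pow₀ (by exact_mod_cast (by omega : 1 ≤ N))
  have hCN : C * N ^ d < 1 :=
    (lt_div_iff₀ (by positivity)).1 (by rw [one_div]; exact max_lt hC₀ (by positivity))
  have hdich (φ : lp (fun _ : Γ => 𝓗) 2) : ∀ x ∈ Γ, massSq Γ φ (closedBall x ((L + r) / N + r)) ≤
      C * massSq Γ φ (ball x L) ∨
      massSq Γ φ (ball x L) ≤ κ * massSq Γ ((H - (μ : ℂ) • 1) φ) (ball x L) := fun x hx => by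
    by_cases hq : normOn Γ ((H - (lam : ℂ) • 1) φ) (ball x L) ≤ ε * normOn Γ φ (ball x L)
    · exact .inl ((hquasi x hx φ hq).trans
        (mul_le_mul_of_nonneg_right (le_max_left _ _) (massSq_nonneg _ _)))
    · exact .inr (massSq_le_of_mul_normOn_lt H hμ φ _ (not_le.1 hq))
  rcases lt_or_ge ((L + r) / N + r) L with hlt | hge
  · refine ⟨N ^ d * κ / (1 - C * N ^ d), fun φ => ?_⟩
    have := norm_sq_le_of_forall_massSq_closedBall_le_or φ _ hnet hL ((norm_nonneg _).trans hr)
      (by omega) hlt (le_max_right _ _) (by positivity) (hdich φ)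
    rw [div_mul_eq_mul_div, le_div_iff₀ (by linarith)]
    linarith
  · refine ⟨5 ^ d * κ, fun φ => ?_⟩
    refine (norm_sq_le_of_forall_massSq_ball_le φ _ (κ := κ) hL (by positivity)
      fun x hx => ?_).trans_eq (by ring)
    rcases hdich φ x hx with h | h
    · have hball := (massSq_mono φ (ball_subset_closedBall.trans
        (closedBall_subset_closedBall hge))).trans h
      have hC1 : C < 1 := by nlinarith [le_max_right C₀ 0]
      have hzero : massSq Γ φ (ball x L) ≤ 0 := by nlinarith [massSq_nonneg φ (ball x L)]
      exact hzero.trans (mul_nonneg (by positivity) (massSq_nonneg _ _))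
    · exact h

end BoundedBelow

theorem spectral_gap_of_locally_bulk_gapped_general
    {d : ℕ} {r : ℝ}
    (Γ : Set (Fin d → ℝ))
    (hnet : ∀ p : Fin d → ℝ, ∃ x ∈ Γ, ‖p - x‖ ≤ r)
    {𝓗 : Type*} [NormedAddCommGroup 𝓗] [InnerProductSpace ℂ 𝓗] [CompleteSpace 𝓗]
    (H : lp (fun _ : Γ => 𝓗) 2 →L[ℂ] lp (fun _ : Γ => 𝓗) 2)
    (hH : IsSelfAdjoint H)
    (lam ε L : ℝ) (hL : 0 < L)
    (hgap : IsLocallyBulkGapped Γ r H lam ε L) :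
    ∀ μ : ℝ, μ ∈ Set.Ioo (lam - ε) (lam + ε) → (μ : ℂ) ∉ spectrum ℂ H := by
  intro μ hμ
  have hμ' : |μ - lam| < ε := abs_sub_lt_iff.2 ⟨by linarith [hμ.2], by linarith [hμ.1]⟩
  obtain ⟨K, hK⟩ := hgap.exists_norm_sq_le hnet hL hμ'
  exact hH.ofReal_notMem_spectrum_of_norm_sq_le hK

/-- **Theorem (main).** If a bounded self-adjoint Hamiltonian `H` on `ℓ²(Γ;𝓗)` is locally
ε-bulk-gapped at energy `lam` and some scale `L > 0`, then `(lam - ε, lam + ε)` is a gap in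
the spectrum of `H`. -/
theorem spectral_gap_of_locally_bulk_gapped
    {d : ℕ} (hd : 1 ≤ d) {r : ℝ} (hr : 0 < r)
    (Γ : Set (Fin d → ℝ)) (hΓcount : Γ.Countable)
    (hnet : ∀ p : Fin d → ℝ, ∃ x ∈ Γ, ‖p - x‖ ≤ r)
    {𝓗 : Type*} [NormedAddCommGroup 𝓗] [InnerProductSpace ℂ 𝓗] [CompleteSpace 𝓗]
    [TopologicalSpace.SeparableSpace 𝓗]
    (H : lp (fun _ : Γ => 𝓗) 2 →L[ℂ] lp (fun _ : Γ => 𝓗) 2)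
    (hH : IsSelfAdjoint H)
    (lam ε L : ℝ) (hε : 0 < ε) (hL : 0 < L)
    (hgap : IsLocallyBulkGapped Γ r H lam ε L) :
    ∀ μ : ℝ, μ ∈ Set.Ioo (lam - ε) (lam + ε) → (μ : ℂ) ∉ spectrum ℂ H :=
  spectral_gap_of_locally_bulk_gapped_general Γ hnet H hH lam ε L hL hgap

end
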